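/- For all messages m, m' and every atomic key k, the normal form of the encrypted pair {m·m'}_k under the homomorphic rewrite relation equals the pair of the normal forms of the separately encrypted components: ({m·m'}_k)↓ = ({m}_k)↓ · ({m'}_k)↓. -/

import Mathlib

/-!
Pushing every encryption through all pairs defines a function `normalize` that is invariant under
rewriting and fixes every normal form, so any normal form of `m` equals `normalize m`. The theorem is
then the defining equation of `normalize` on an encrypted pair.
-/

/-- Messages: the free term algebra generated by atoms under pairing and
encryption with atomic keys. -/
inductive Msg (A : Type) : Type
  | atom : A → Msg A
  | pair : Msg A → Msg A → Msg A
  | enc : Msg A → A → Msg A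

/-- The homomorphic rewrite relation: smallest relation containing every
instance of `{m·m'}_k → {m}_k·{m'}_k` and closed under contexts. -/
inductive Rw {A : Type} : Msg A → Msg A → Prop
  | homo (m m' : Msg A) (k : A) :
      Rw (.enc (.pair m m') k) (.pair (.enc m k) (.enc m' k))
  | pairL {m m' : Msg A} (n : Msg A) : Rw m m' → Rw (.pair m n) (.pair m' n)
  | pairR {m m' : Msg A} (n : Msg A) : Rw m m' → Rw (.pair n m) (.pair n m')
  | enc {m m' : Msg A} (k : A) : Rw m m' → Rw (.enc m k) (.enc m' k)

/-- A message is a normal form if no rewrite step applies to it. -/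
def IsNormalForm {A : Type} (m : Msg A) : Prop := ∀ m' : Msg A, ¬ Rw m m'

namespace Msg

variable {A : Type}

def encPush (k : A) : Msg A → Msg A
  | pair u v => pair (encPush k u) (encPush k v)
  | t => enc t k

def normalize : Msg A → Msg A
  | atom a => atom a
  | pair u v => pair (normalize u) (normalize v)
  | enc u k => encPush k (normalize u)

theorem normalize_eq_of_rw {m m' : Msg A} (h : Rw m m') : normalize m = normalize m' := by
  induction h with
  | homo => rfl
  | pairL n _ ih => simp only [normalize, ih]
  | pairR n _ ih => simp only [normalize, ih]
  | enc k _ ih => simp only [normalize, ih]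

theorem normalize_eq_of_reflTransGen {m m' : Msg A} (h : Relation.ReflTransGen Rw m m') :
    normalize m = normalize m' := by
  induction h with
  | refl => rfl
  | tail _ step ih => exact ih.trans (normalize_eq_of_rw step)

end Msg

namespace IsNormalForm

variable {A : Type}

theorem of_pair_left {u v : Msg A} (h : IsNormalForm (.pair u v)) : IsNormalForm u :=
  fun _ hu => h _ (Rw.pairL v hu)

theorem of_pair_right {u v : Msg A} (h : IsNormalForm (.pair u v)) : IsNormalForm v :=
  fun _ hv => h _ (Rw.pairR u hv)

theorem of_enc {u : Msg A} {k : A} (h : IsNormalForm (.enc u k)) : IsNormalForm u :=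
  fun _ hu => h _ (Rw.enc k hu)

theorem normalize_eq {m : Msg A} (h : IsNormalForm m) : m.normalize = m := by
  induction m with
  | atom => rfl
  | pair u v ihu ihv =>
    simp only [Msg.normalize, ihu h.of_pair_left, ihv h.of_pair_right]
  | enc u k ihu =>
    rw [Msg.normalize, ihu h.of_enc]
    cases u with
    | pair a b => exact absurd (Rw.homo a b k) (h _)
    | atom => rfl
    | enc => rfl

end IsNormalForm

theorem Msg.eq_normalize_of_reflTransGen {A : Type} {m n : Msg A} (hmn : Relation.ReflTransGen Rw m n)
    (hn : IsNormalForm n) : n = m.normalize := by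
  rw [Msg.normalize_eq_of_reflTransGen hmn, hn.normalize_eq]

theorem nf_enc_pair_general
    (A : Type) (nf : Msg A → Msg A)
    (hnf : ∀ m : Msg A,
      Relation.ReflTransGen Rw m (nf m) ∧ IsNormalForm (nf m))
    (m m' : Msg A) (k : A) :
    nf (.enc (.pair m m') k) = .pair (nf (.enc m k)) (nf (.enc m' k)) := by
  have nf_eq_normalize (t : Msg A) : nf t = t.normalize :=
    Msg.eq_normalize_of_reflTransGen (hnf t).1 (hnf t).2
  simp only [nf_eq_normalize]
  rfl

/-- The normal form of an encrypted pair is the pair of the normal forms of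
the separately encrypted components:
`({m·m'}_k)↓ = ({m}_k)↓ · ({m'}_k)↓`. -/
theorem nf_enc_pair
    (A : Type) [Countable A] (nf : Msg A → Msg A)
    (hnf : ∀ m : Msg A,
      Relation.ReflTransGen Rw m (nf m) ∧ IsNormalForm (nf m))
    (m m' : Msg A) (k : A) :
    nf (.enc (.pair m m') k) = .pair (nf (.enc m k)) (nf (.enc m' k)) :=
  nf_enc_pair_general A nf hnf m m' k
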